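/- arXiv:2007.04377 — 2 statements merged into one kernel-verified Lean document; each statement's English description precedes it below -/
import Mathlib

section
/- In the greedy parallel energy schedule on a path of k particles, once a particle P_i has received energy for the first time, in every subsequent parallel round P_i receives α energy until its battery is full, and P_i transfers α energy to P_{i+1} in every subsequent round until P_{i+1}'s battery is full. -/
open scoped Classical

/-- Energy received by particle `j` in one greedy parallel round. -/
noncomputable def recvE (α κ' : ℝ) (B : ℕ → ℝ) (j : ℕ) : ℝ :=
  if j = 0 then min α (κ' - B 0)
  else if α ≤ B (j - 1) ∧ B j < κ' then min α (κ' - B j) else 0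

/-- Energy sent by particle `j` to `j+1` in one greedy parallel round. -/
noncomputable def sendE (α κ' : ℝ) (k : ℕ) (B : ℕ → ℝ) (j : ℕ) : ℝ :=
  if j + 1 < k then recvE α κ' B (j + 1) else 0

/-- One greedy parallel round of the energy schedule on a path of `k` particles. -/
noncomputable def stepE (α κ' : ℝ) (k : ℕ) (B : ℕ → ℝ) : ℕ → ℝ :=
  fun j => B j + recvE α κ' B j - sendE α κ' k B j

/-!
Measured in units of `α`, every battery holds a natural number of units in `[0, N]` and every
transfer moves exactly one unit, so the schedule is simulated by a token dynamics on `ℕ`.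
Call particle `j` supplied when its predecessor holds a unit or `j` is full (the harvesting
particle is always supplied): a supplied particle receives whenever it is not full, and `P_j`
sends whenever `P_{j+1}` is supplied and not full. Receiving at round `t` makes `P_i` supplied
and leaves a unit in `P_i`, so from round `t + 1` on both `P_i` and `P_{i+1}` are supplied.
Being supplied persists from round to round; this is a local case check, valid because every
empty battery is either in the final run of empty batteries or an isolated hole between two
full ones.
-/

open Function

def unitRecv (N : ℕ) (b : ℕ → ℕ) : ℕ → ℕ
  | 0 => if b 0 < N then 1 else 0
  | j + 1 => if 0 < b j ∧ b (j + 1) < N then 1 else 0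

def unitSend (N k : ℕ) (b : ℕ → ℕ) (j : ℕ) : ℕ :=
  if j + 1 < k then unitRecv N b (j + 1) else 0

-- The truncated subtraction is exact, by `unitSend_le`.
def unitStep (N k : ℕ) (b : ℕ → ℕ) (j : ℕ) : ℕ :=
  b j + unitRecv N b j - unitSend N k b j

def Supplied (N : ℕ) (b : ℕ → ℕ) : ℕ → Prop
  | 0 => True
  | j + 1 => 0 < b j ∨ b (j + 1) = N

def UnitInvariant (N k : ℕ) (b : ℕ → ℕ) : Prop :=
  (∀ j < k, b j ≤ N) ∧
  (∀ j, j + 1 < k → b j = 0 → b (j + 1) = 0 ∨ b (j + 1) = N) ∧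
  (∀ j, j + 2 < k → b (j + 1) = 0 → 0 < b (j + 2) → b j = N)

section UnitSchedule

variable {N k : ℕ} {b : ℕ → ℕ} {j : ℕ}

lemma unitRecv_le_one : unitRecv N b j ≤ 1 := by
  cases j <;> simp only [unitRecv] <;> split_ifs <;> omega

lemma unitSend_le : unitSend N k b j ≤ b j := by
  simp only [unitSend, unitRecv]; split_ifs <;> omega

lemma unitRecv_eq_one (hs : Supplied N b j) (hlt : b j < N) : unitRecv N b j = 1 := by
  rcases j with _ | j
  · simp [unitRecv, hlt]
  · have : 0 < b j := hs.resolve_right hlt.ne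
    simp [unitRecv, this, hlt]

lemma unitSend_eq_one (hj : j + 1 < k) (hs : Supplied N b (j + 1)) (hlt : b (j + 1) < N) :
    unitSend N k b j = 1 := by
  rw [unitSend, if_pos hj, unitRecv_eq_one hs hlt]

lemma supplied_of_unitRecv_pos (h : 0 < unitRecv N b j) : Supplied N b j := by
  rcases j with _ | j
  · trivial
  · simp only [unitRecv] at h
    split_ifs at h with hc
    exacts [Or.inl hc.1, absurd h (lt_irrefl 0)]

lemma supplied_succ_unitStep_of_unitRecv_pos (h : 0 < unitRecv N b j) :
    Supplied N (unitStep N k b) (j + 1) := by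
  have hsend : unitSend N k b j ≤ b j := unitSend_le
  have hsend_le_one : unitSend N k b j ≤ 1 := by
    simp only [unitSend]; split_ifs <;> [exact unitRecv_le_one; omega]
  left; unfold unitStep; omega

lemma unitStep_zero : unitStep N k b 0 =
    b 0 + (if b 0 < N then 1 else 0) - (if 1 < k ∧ 0 < b 0 ∧ b 1 < N then 1 else 0) := by
  simp only [unitStep, unitSend, unitRecv, zero_add]; split_ifs <;> simp_all

lemma unitStep_succ (j : ℕ) : unitStep N k b (j + 1) =
    b (j + 1) + (if 0 < b j ∧ b (j + 1) < N then 1 else 0) -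
      (if j + 2 < k ∧ 0 < b (j + 1) ∧ b (j + 2) < N then 1 else 0) := by
  simp only [unitStep, unitSend, unitRecv]; split_ifs <;> simp_all

lemma unitInvariant_unitStep (h : UnitInvariant N k b) : UnitInvariant N k (unitStep N k b) := by
  obtain ⟨hle, hzero, hhole⟩ := h
  refine ⟨fun j hj => ?_, fun j hj hj0 => ?_, fun j hj hj1 hj2 => ?_⟩
  · have := hle j hj
    rcases j with _ | j
    · rw [unitStep_zero]; split_ifs <;> omega
    · rw [unitStep_succ]; split_ifs <;> omega
  · rcases j with _ | j
    · have z0 := hzero 0 hj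
      rw [unitStep_zero] at hj0; rw [unitStep_succ]
      simp only [Nat.reduceAdd] at *
      split_ifs at hj0 ⊢ <;> omega
    · have z0 := hzero j (by omega); have z1 := hzero (j + 1) hj; have o0 := hhole j hj
      rw [unitStep_succ] at hj0; rw [unitStep_succ]
      simp only [add_assoc, Nat.reduceAdd] at *
      split_ifs at hj0 ⊢ <;> omega
  · rcases j with _ | j
    · have h0 := hle 0 (by omega); have z0 := hzero 0 (by omega); have o0 := hhole 0 hj
      rw [unitStep_zero]; rw [unitStep_succ] at hj1 hj2
      simp only [Nat.reduceAdd] at *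
      split_ifs at hj1 hj2 ⊢ <;> omega
    · have h1 := hle (j + 1) (by omega); have z1 := hzero (j + 1) (by omega)
      have o0 := hhole j (by omega); have o1 := hhole (j + 1) hj
      rw [unitStep_succ]; rw [unitStep_succ] at hj1 hj2
      simp only [add_assoc, Nat.reduceAdd] at *
      split_ifs at hj1 hj2 ⊢ <;> omega

lemma supplied_unitStep (h : UnitInvariant N k b) (hj : j < k) (hs : Supplied N b j) :
    Supplied N (unitStep N k b) j := by
  rcases j with _ | _ | j
  · trivial
  · simp only [Supplied] at hs ⊢
    rw [unitStep_zero, unitStep_succ]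
    simp only [Nat.reduceAdd] at *
    split_ifs <;> omega
  · have z0 := h.2.1 j (by omega); have o0 := h.2.2 j hj
    simp only [Supplied] at hs ⊢
    rw [unitStep_succ, unitStep_succ]
    simp only [add_assoc, Nat.reduceAdd] at *
    split_ifs <;> omega

lemma unitInvariant_iterate (t : ℕ) : UnitInvariant N k ((unitStep N k)^[t] fun _ => 0) := by
  induction t with
  | zero => exact ⟨fun _ _ => Nat.zero_le N, fun _ _ _ => Or.inl rfl, fun _ _ _ h => by simp at h⟩
  | succ t ih => rw [iterate_succ_apply']; exact unitInvariant_unitStep ih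

lemma supplied_iterate_of_le {t s : ℕ} (hj : j < k) (hts : t ≤ s)
    (hs : Supplied N ((unitStep N k)^[t] fun _ => 0) j) :
    Supplied N ((unitStep N k)^[s] fun _ => 0) j := by
  induction s, hts using Nat.le_induction with
  | base => exact hs
  | succ s _ ih => rw [iterate_succ_apply']; exact supplied_unitStep (unitInvariant_iterate s) hj ih

end UnitSchedule

section Simulation

variable {N k : ℕ} {b : ℕ → ℕ} {j : ℕ} {α κ' : ℝ} {B : ℕ → ℝ}

lemma recvE_eq_unitRecv_mul (hα : 0 < α) (hκ : κ' = N * α) (hB : ∀ j < k, B j = b j * α)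
    (hb : ∀ j < k, b j ≤ N) (hj : j < k) : recvE α κ' B j = unitRecv N b j * α := by
  have hlt : ∀ i < k, (B i < κ' ↔ b i < N) := fun i hi => by
    rw [hB i hi, hκ, mul_lt_mul_iff_left₀ hα, Nat.cast_lt]
  have hmin : ∀ i < k, min α (κ' - B i) = if b i < N then α else 0 := fun i hi => by
    have := hb i hi
    rw [hB i hi, hκ, ← sub_mul]
    split_ifs with h
    · exact min_eq_left (le_mul_of_one_le_left hα.le (by norm_cast; omega))
    · rw [show (N : ℝ) = b i by norm_cast; omega, sub_self, zero_mul, min_eq_right hα.le]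
  rcases j with _ | j
  · simp only [recvE, unitRecv, if_true, hmin 0 hj]; split_ifs <;> simp
  · have hpos : α ≤ B j ↔ 0 < b j := by
      rw [hB j (by omega), le_mul_iff_one_le_left hα, Nat.one_le_cast, Nat.one_le_iff_ne_zero,
        Nat.pos_iff_ne_zero]
    simp only [recvE, unitRecv, Nat.add_sub_cancel, if_neg (Nat.succ_ne_zero j), hpos, hlt _ hj,
      hmin _ hj]
    split_ifs <;> simp_all

lemma sendE_eq_unitSend_mul (hα : 0 < α) (hκ : κ' = N * α) (hB : ∀ j < k, B j = b j * α)
    (hb : ∀ j < k, b j ≤ N) : sendE α κ' k B j = unitSend N k b j * α := by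
  rw [sendE, unitSend]
  split_ifs with hj
  · exact recvE_eq_unitRecv_mul hα hκ hB hb hj
  · simp

lemma stepE_eq_unitStep_mul (hα : 0 < α) (hκ : κ' = N * α) (hB : ∀ j < k, B j = b j * α)
    (hb : ∀ j < k, b j ≤ N) (hj : j < k) : stepE α κ' k B j = unitStep N k b j * α := by
  have hsend : unitSend N k b j ≤ b j + unitRecv N b j := unitSend_le.trans (Nat.le_add_right _ _)
  rw [stepE, unitStep, Nat.cast_sub hsend, hB j hj, recvE_eq_unitRecv_mul hα hκ hB hb hj,
    sendE_eq_unitSend_mul hα hκ hB hb]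
  push_cast; ring

lemma stepE_iterate_eq_unitStep_iterate_mul (hα : 0 < α) (hκ : κ' = N * α) (t : ℕ) :
    ∀ j < k, (stepE α κ' k)^[t] (fun _ => 0) j = (unitStep N k)^[t] (fun _ => 0) j * α := by
  induction t with
  | zero => simp
  | succ t ih =>
    intro j hj
    rw [iterate_succ_apply', iterate_succ_apply']
    exact stepE_eq_unitStep_mul hα hκ ih (unitInvariant_iterate t).1 hj

end Simulation

theorem greedy_parallel_pipelining_general (k N : ℕ) (α κ' : ℝ)
    (hα : 0 < α) (hκ : κ' = (N : ℝ) * α)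
    (i : ℕ) (hik : i < k) (t : ℕ)
    (hfirst : 0 < recvE α κ' ((stepE α κ' k)^[t] (fun _ => 0)) i) :
    ∀ s, t < s →
      (((stepE α κ' k)^[s] (fun _ => 0)) i < κ' →
        recvE α κ' ((stepE α κ' k)^[s] (fun _ => 0)) i = α) ∧
      (i + 1 < k → ((stepE α κ' k)^[s] (fun _ => 0)) (i + 1) < κ' →
        sendE α κ' k ((stepE α κ' k)^[s] (fun _ => 0)) i = α) := by
  set b : ℕ → ℕ → ℕ := fun u => (unitStep N k)^[u] fun _ => 0 with hb
  have hB := stepE_iterate_eq_unitStep_iterate_mul (k := k) hα hκ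
  have hbound : ∀ u, ∀ j < k, b u j ≤ N := fun u => (unitInvariant_iterate u).1
  have hlt : ∀ u, ∀ j < k, ((stepE α κ' k)^[u] (fun _ => 0) j < κ' ↔ b u j < N) :=
    fun u j hj => by rw [hB u j hj, hκ, mul_lt_mul_iff_left₀ hα, Nat.cast_lt]
  rw [recvE_eq_unitRecv_mul hα hκ (hB t) (hbound t) hik, mul_pos_iff_of_pos_right hα,
    Nat.cast_pos] at hfirst
  have hsupplied : Supplied N (b (t + 1)) i := by
    simp only [hb, iterate_succ_apply']
    exact supplied_unitStep (unitInvariant_iterate t) hik (supplied_of_unitRecv_pos hfirst)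
  have hsupplied_succ : Supplied N (b (t + 1)) (i + 1) := by
    simp only [hb, iterate_succ_apply']
    exact supplied_succ_unitStep_of_unitRecv_pos hfirst
  intro s hts
  refine ⟨fun hs => ?_, fun hi hs => ?_⟩
  · rw [recvE_eq_unitRecv_mul hα hκ (hB s) (hbound s) hik,
      unitRecv_eq_one (supplied_iterate_of_le hik hts hsupplied) ((hlt s i hik).1 hs),
      Nat.cast_one, one_mul]
  · rw [sendE_eq_unitSend_mul hα hκ (hB s) (hbound s),
      unitSend_eq_one hi (supplied_iterate_of_le hi hts hsupplied_succ) ((hlt s (i + 1) hi).1 hs),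
      Nat.cast_one, one_mul]

/-- In the greedy parallel energy schedule on a path of `k` particles (starting
from all batteries empty), once particle `P_i` has received energy for the first time (in some
round `t`), then in every subsequent round it receives exactly `α` energy until its battery is
full, and it transfers exactly `α` energy to `P_{i+1}` in every subsequent round until
`P_{i+1}`'s battery is full. -/
theorem greedy_parallel_pipelining (k N : ℕ) (α κ' : ℝ)
    (hα : 0 < α) (hκ : κ' = (N : ℝ) * α) (hN : 0 < N)
    (i : ℕ) (hik : i < k) (t : ℕ)
    (hfirst : 0 < recvE α κ' ((stepE α κ' k)^[t] (fun _ => 0)) i) :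
    ∀ s, t < s →
      (((stepE α κ' k)^[s] (fun _ => 0)) i < κ' →
        recvE α κ' ((stepE α κ' k)^[s] (fun _ => 0)) i = α) ∧
      (i + 1 < k → ((stepE α κ' k)^[s] (fun _ => 0)) (i + 1) < κ' →
        sendE α κ' k ((stepE α κ' k)^[s] (fun _ => 0)) i = α) :=
  greedy_parallel_pipelining_general k N α κ' hα hκ i hik t hfirst
end

section
/- Prune propagation time: if a vertex crashes, creating a faulty tree T of its non-crashed descendants, then any particle at depth d in T is pruned (clears its parent pointer and becomes idle) within at most d asynchronous rounds after the crash. -/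
theorem prune_within_depth_rounds_general {V : Type} (parent : V → V) (r : V)
    (dep : V → ℕ) (hdr : dep r = 1)
    (hdep : ∀ v, v ≠ r → dep v = dep (parent v) + 1)
    (pruned : ℕ → V → Prop)
    (hstep : ∀ t v, (v = r ∨ pruned t (parent v)) → pruned (t + 1) v) :
    ∀ v, pruned (dep v) v := by
  suffices h : ∀ n v, dep v = n → pruned n v from fun v => h _ v rfl
  intro n
  induction n with
  | zero =>
    intro v hv
    by_cases hvr : v = r
    · subst hvr; omega
    · have := hdep v hvr; omega
  | succ n ih =>
    intro v hv
    by_cases hvr : v = r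
    · obtain rfl : n = 0 := by subst hvr; omega
      exact hstep 0 v (Or.inl hvr)
    · have hparent : dep (parent v) = n := by have := hdep v hvr; omega
      exact hstep n v (Or.inr (ih _ hparent))

/-- Prune propagation time: in a faulty tree (whose root `r`, at depth 1, is
the child of the crashed vertex), where in every asynchronous round the root gets pruned and
any vertex whose parent is already pruned gets pruned, every vertex at depth `d` is pruned
within at most `d` asynchronous rounds after the crash. -/
theorem prune_within_depth_rounds {V : Type} (parent : V → V) (r : V)
    (dep : V → ℕ) (hdr : dep r = 1)
    (hdep : ∀ v, v ≠ r → dep v = dep (parent v) + 1)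
    (hreach : ∀ v, ∃ m : ℕ, parent^[m] v = r)
    (pruned : ℕ → V → Prop)
    (hp0 : ∀ v, ¬ pruned 0 v)
    (hmono : ∀ t v, pruned t v → pruned (t + 1) v)
    (hstep : ∀ t v, (v = r ∨ pruned t (parent v)) → pruned (t + 1) v) :
    ∀ v, pruned (dep v) v :=
  prune_within_depth_rounds_general parent r dep hdr hdep pruned hstep
end
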